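/- Let c ≥ 1 and let E ⊂ ℂ be a compact set with the chord–arc property with constant c: any two points z, ζ ∈ E can be joined by a continuously differentiable path γ : [0,1] → ℂ with γ(0) = z, γ(1) = ζ, γ([0,1]) ⊆ E, and length ∫_0^1 |γ′(t)| dt ≤ c·|z − ζ|. Let k ≥ 1, let f : E → ℂ be continuous, and let F : E → ℂ be a primitive of f along arcs, i.e. F(γ(1)) − F(γ(0)) = ∫_0^1 f(γ(t))·γ′(t) dt for every continuously differentiable path γ : [0,1] → ℂ with range contained in E. Then for every z ∈ E and every δ > 0, the best uniform approximation error of F on E ∩ D̄(z,δ) by complex polynomials of degree at most k satisfies E_k(F, E ∩ D̄(z,δ)) ≤ c·δ·ω_{f,k,E}(c·δ); equivalently, ω_{F,k+1,z,E}(δ) ≤ c·δ·ω_{f,k,E}(c·δ). -/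

import Mathlib

/-- The uniform (sup) norm of `g` on the set `E ⊆ ℂ`. -/
noncomputable def supNorm (E : Set ℂ) (g : ℂ → ℂ) : ℝ :=
  ⨆ z : E, ‖g z‖

/-- `E_n(f,E)`: the error of best uniform approximation of `f` on `E` by
complex polynomials of degree at most `n`. -/
noncomputable def bestApprox (n : ℕ) (E : Set ℂ) (f : ℂ → ℂ) : ℝ :=
  ⨅ p : {p : Polynomial ℂ // p.natDegree ≤ n},
    supNorm E (fun w => f w - (p : Polynomial ℂ).eval w)

/-- `ω_{f,k,E}(δ)`: the k-th (global) modulus of continuity of `f` on `E`,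
the sup over `z ∈ E` of the error of best uniform approximation of `f` on
`E ∩ D̄(z,δ)` by polynomials of degree at most `k-1`. -/
noncomputable def modulus (f : ℂ → ℂ) (k : ℕ) (E : Set ℂ) (δ : ℝ) : ℝ :=
  ⨆ z : E, bestApprox (k - 1) (E ∩ Metric.closedBall (z : ℂ) δ) f

open Polynomial Metric intervalIntegral

lemma supNorm_nonneg' (E : Set ℂ) (g : ℂ → ℂ) : 0 ≤ supNorm E g :=
  Real.iSup_nonneg fun _ => norm_nonneg _

instance polyIndex_nonempty (n : ℕ) : Nonempty {p : Polynomial ℂ // p.natDegree ≤ n} :=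
  ⟨⟨0, by simp⟩⟩

lemma bestApprox_nonneg' (n : ℕ) (E : Set ℂ) (f : ℂ → ℂ) : 0 ≤ bestApprox n E f :=
  le_ciInf fun _ => supNorm_nonneg' _ _

lemma bestApprox_le' (n : ℕ) (E : Set ℂ) (f : ℂ → ℂ) (p : Polynomial ℂ)
    (hp : p.natDegree ≤ n) :
    bestApprox n E f ≤ supNorm E (fun w => f w - p.eval w) := by
  have h := ciInf_le (f := fun p : {p : Polynomial ℂ // p.natDegree ≤ n} =>
      supNorm E (fun w => f w - (p : Polynomial ℂ).eval w))
    ⟨0, Set.forall_mem_range.2 fun _ => supNorm_nonneg' _ _⟩ ⟨p, hp⟩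
  exact h

lemma supNorm_le' {E : Set ℂ} {g : ℂ → ℂ} {M : ℝ} (hM : 0 ≤ M)
    (h : ∀ w ∈ E, ‖g w‖ ≤ M) : supNorm E g ≤ M :=
  Real.iSup_le (fun w => h w w.2) hM

lemma le_supNorm' {E : Set ℂ} (hE : IsCompact E) {g : ℂ → ℂ} (hg : ContinuousOn g E)
    {w : ℂ} (hw : w ∈ E) : ‖g w‖ ≤ supNorm E g := by
  have hbdd : BddAbove (Set.range fun z : E => ‖g z‖) := by
    have := (hE.image_of_continuousOn
      (continuous_norm.comp_continuousOn hg)).bddAbove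
    rwa [Set.image_eq_range] at this
  exact le_ciSup hbdd ⟨w, hw⟩

noncomputable def antid (p : Polynomial ℂ) : Polynomial ℂ :=
  p.sum fun i a => Polynomial.C (a / (i + 1)) * Polynomial.X ^ (i + 1)

lemma antid_derivative (p : Polynomial ℂ) : Polynomial.derivative (antid p) = p := by
  conv_rhs => rw [← Polynomial.sum_C_mul_X_pow_eq p]
  unfold antid Polynomial.sum
  rw [map_sum]
  refine Finset.sum_congr rfl fun i _ => ?_
  rw [Polynomial.derivative_C_mul_X_pow]
  have hne : ((i : ℂ) + 1) ≠ 0 := Nat.cast_add_one_ne_zero i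
  have h1 : p.coeff i / ((i : ℂ) + 1) * (((i + 1 : ℕ) : ℂ)) = p.coeff i := by
    push_cast
    field_simp
  rw [Nat.add_sub_cancel, h1]

lemma antid_natDegree_le (p : Polynomial ℂ) : (antid p).natDegree ≤ p.natDegree + 1 := by
  unfold antid Polynomial.sum
  apply Polynomial.natDegree_sum_le_of_forall_le
  intro i hi
  refine (Polynomial.natDegree_mul_le).trans ?_
  simp only [Polynomial.natDegree_C, Polynomial.natDegree_X_pow, zero_add]
  exact Nat.add_le_add_right (Polynomial.le_natDegree_of_mem_supp i hi) 1

lemma poly_path_integral (Q : Polynomial ℂ) (γ : ℝ → ℂ) (hγ : ContDiff ℝ 1 γ) :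
    Q.eval (γ 1) - Q.eval (γ 0)
      = ∫ t in (0:ℝ)..1, Q.derivative.eval (γ t) * deriv γ t := by
  have hd : ∀ t ∈ Set.uIcc (0:ℝ) 1,
      HasDerivAt (fun s => Q.eval (γ s)) (Q.derivative.eval (γ t) * deriv γ t) t := by
    intro t _
    have h1 : HasDerivAt (fun x : ℂ => Q.eval x) (Q.derivative.eval (γ t)) (γ t) :=
      Q.hasDerivAt (γ t)
    have h2 : HasDerivAt γ (deriv γ t) t :=
      ((hγ.differentiable one_ne_zero) t).hasDerivAt
    have h3 := h1.scomp t h2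
    simpa [Function.comp_def, smul_eq_mul, mul_comm] using h3
  have hint : IntervalIntegrable (fun t => Q.derivative.eval (γ t) * deriv γ t)
      MeasureTheory.volume 0 1 := by
    apply Continuous.intervalIntegrable
    exact ((Q.derivative.continuous_aeval).comp hγ.continuous).mul
      (hγ.continuous_deriv le_rfl)
  exact (intervalIntegral.integral_eq_sub_of_hasDerivAt hd hint).symm

lemma path_dist_le (γ : ℝ → ℂ) (hγ : ContDiff ℝ 1 γ) {t : ℝ} (ht : t ∈ Set.Icc (0:ℝ) 1) :
    ‖γ t - γ 0‖ ≤ ∫ s in (0:ℝ)..1, ‖deriv γ s‖ := by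
  have hcd : Continuous (deriv γ) := hγ.continuous_deriv le_rfl
  have hint : ∀ a b : ℝ, IntervalIntegrable (fun s => ‖deriv γ s‖) MeasureTheory.volume a b :=
    fun a b => (hcd.norm).intervalIntegrable a b
  have heq : γ t - γ 0 = ∫ s in (0:ℝ)..t, deriv γ s := by
    refine (intervalIntegral.integral_deriv_eq_sub (fun x _ => (hγ.differentiable one_ne_zero) x) ?_).symm
    exact hcd.intervalIntegrable 0 t
  have h1 : ‖γ t - γ 0‖ ≤ ∫ s in (0:ℝ)..t, ‖deriv γ s‖ := by
    rw [heq]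
    exact intervalIntegral.norm_integral_le_integral_norm ht.1
  have h2 : (∫ s in (0:ℝ)..t, ‖deriv γ s‖) ≤ ∫ s in (0:ℝ)..1, ‖deriv γ s‖ := by
    have hsplit := intervalIntegral.integral_add_adjacent_intervals (hint 0 t) (hint t 1)
    have hpos : 0 ≤ ∫ s in t..(1:ℝ), ‖deriv γ s‖ :=
      intervalIntegral.integral_nonneg ht.2 (fun s _ => norm_nonneg _)
    linarith
  have : (∫ s in (0:ℝ)..1, ‖deriv γ s‖) = ∫ s in (0:ℝ)..1, ‖deriv γ s‖ := by
    simp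
  linarith [h1.trans h2, this.le, this.ge]

/-- If `E` is compact with the chord–arc property with constant `c ≥ 1`, `f` is
continuous on `E` and `F` is a primitive of `f` along arcs in `E`, then the local
best approximation of `F` by polynomials of degree at most `k` satisfies
`ω_{F,k+1,z,E}(δ) = E_k(F, E ∩ D̄(z,δ)) ≤ c⬝δ⬝ω_{f,k,E}(cδ)`. -/
theorem local_modulus_of_primitive
    (c : ℝ) (hc : 1 ≤ c) (E : Set ℂ) (hE : IsCompact E)
    (harc : ∀ z ∈ E, ∀ ζ ∈ E, ∃ γ : ℝ → ℂ, ContDiff ℝ 1 γ ∧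
      γ 0 = z ∧ γ 1 = ζ ∧ γ '' Set.Icc 0 1 ⊆ E ∧
      (∫ t in (0:ℝ)..1, ‖deriv γ t‖) ≤ c * ‖z - ζ‖)
    (k : ℕ) (hk : 1 ≤ k)
    (f F : ℂ → ℂ) (hf : ContinuousOn f E)
    (hF : ∀ γ : ℝ → ℂ, ContDiff ℝ 1 γ → γ '' Set.Icc 0 1 ⊆ E →
      F (γ 1) - F (γ 0) = ∫ t in (0:ℝ)..1, f (γ t) * deriv γ t) :
    ∀ z ∈ E, ∀ δ : ℝ, 0 < δ →
      bestApprox k (E ∩ Metric.closedBall z δ) F ≤ c * δ * modulus f k E (c * δ) := by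
  intro z hz δ hδ
  have hc0 : (0:ℝ) < c := lt_of_lt_of_le one_pos hc
  have hcδ : 0 < c * δ := mul_pos hc0 hδ
  set S := E ∩ Metric.closedBall z δ with hS
  set T := E ∩ Metric.closedBall z (c * δ) with hT
  have hTc : IsCompact T := hE.inter_right Metric.isClosed_closedBall
  have hfT : ContinuousOn f T := hf.mono Set.inter_subset_left
  -- the family defining the modulus is bounded above
  obtain ⟨M0, hM0⟩ := hE.exists_bound_of_continuousOn hf
  have hmod_bdd : BddAbove (Set.range fun w : E =>
      bestApprox (k - 1) (E ∩ Metric.closedBall (w : ℂ) (c * δ)) f) := by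
    refine ⟨max M0 0, Set.forall_mem_range.2 fun w => ?_⟩
    refine (bestApprox_le' _ _ _ 0 (by simp)).trans ?_
    refine supNorm_le' (le_max_right _ _) fun u hu => ?_
    simpa using (hM0 u hu.1).trans (le_max_left _ 0)
  have hkey : bestApprox (k - 1) T f ≤ modulus f k E (c * δ) := by
    have := le_ciSup hmod_bdd ⟨z, hz⟩
    simpa [modulus, hT] using this
  have hmodnn : 0 ≤ modulus f k E (c * δ) :=
    Real.iSup_nonneg fun w => bestApprox_nonneg' _ _ _
  -- main ε-estimate
  have main : ∀ ε : ℝ, 0 < ε →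
      bestApprox k S F ≤ c * δ * (modulus f k E (c * δ) + ε) := by
    intro ε hε
    have hlt : bestApprox (k - 1) T f < bestApprox (k - 1) T f + ε := by linarith
    rw [bestApprox] at hlt
    obtain ⟨⟨p, hp⟩, hpsup⟩ := exists_lt_of_ciInf_lt hlt
    simp only at hpsup
    set N := supNorm T (fun w => f w - p.eval w) with hN
    have hNnn : 0 ≤ N := supNorm_nonneg' _ _
    have hNle : N ≤ modulus f k E (c * δ) + ε := le_of_lt (lt_of_lt_of_le hpsup (by
      have : bestApprox (k-1) T f + ε ≤ modulus f k E (c * δ) + ε := by linarith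
      exact this))
    -- the antiderivative polynomial
    set Q : Polynomial ℂ := antid p + Polynomial.C (F z - (antid p).eval z) with hQ
    have hQd : Q.derivative = p := by
      rw [hQ, Polynomial.derivative_add, Polynomial.derivative_C, add_zero, antid_derivative]
    have hQdeg : Q.natDegree ≤ k := by
      refine (Polynomial.natDegree_add_le _ _).trans ?_
      simp only [Polynomial.natDegree_C, max_le_iff]
      refine ⟨(antid_natDegree_le p).trans ?_, Nat.zero_le k⟩
      omega
    have hQz : Q.eval z = F z := by
      simp [hQ]
    -- pointwise bound on S
    have hpt : ∀ ζ ∈ S, ‖F ζ - Q.eval ζ‖ ≤ c * δ * N := by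
      intro ζ hζ
      obtain ⟨γ, hγ, h0, h1, hsub, hlen⟩ := harc z hz ζ hζ.1
      have hzζ : ‖z - ζ‖ ≤ δ := by
        have := hζ.2
        rw [Metric.mem_closedBall] at this
        rw [← Complex.dist_eq, dist_comm]
        exact this
      have hlen' : (∫ t in (0:ℝ)..1, ‖deriv γ t‖) ≤ c * δ :=
        hlen.trans (by nlinarith)
      have hlen0 : 0 ≤ ∫ t in (0:ℝ)..1, ‖deriv γ t‖ :=
        intervalIntegral.integral_nonneg zero_le_one fun t _ => norm_nonneg _
      have hmem : ∀ t ∈ Set.Icc (0:ℝ) 1, γ t ∈ T := by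
        intro t ht
        refine ⟨hsub ⟨t, ht, rfl⟩, ?_⟩
        rw [Metric.mem_closedBall, Complex.dist_eq, ← h0]
        exact (path_dist_le γ hγ ht).trans hlen'
      -- interval integrability facts
      have hIcc : Set.uIcc (0:ℝ) 1 = Set.Icc 0 1 := Set.uIcc_of_le zero_le_one
      have hγc : Continuous γ := hγ.continuous
      have hdc : Continuous (deriv γ) := hγ.continuous_deriv le_rfl
      have hfγ : ContinuousOn (fun t => f (γ t)) (Set.Icc (0: ℝ) 1) :=
        hf.comp hγc.continuousOn fun t ht => (hmem t ht).1
      have hpγ : Continuous (fun t => p.eval (γ t)) := p.continuous_aeval.comp hγc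
      have hint1 : IntervalIntegrable (fun t => f (γ t) * deriv γ t)
          MeasureTheory.volume 0 1 := by
        apply ContinuousOn.intervalIntegrable
        rw [hIcc]
        exact hfγ.mul hdc.continuousOn
      have hint2 : IntervalIntegrable (fun t => p.eval (γ t) * deriv γ t)
          MeasureTheory.volume 0 1 :=
        (hpγ.mul hdc).intervalIntegrable 0 1
      -- the integral representation
      have hrep : F ζ - Q.eval ζ
          = ∫ t in (0:ℝ)..1, (f (γ t) - p.eval (γ t)) * deriv γ t := by
        have hFγ := hF γ hγ hsub
        have hQγ := poly_path_integral Q γ hγ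
        rw [hQd] at hQγ
        have : F ζ - Q.eval ζ = (F (γ 1) - F (γ 0)) - (Q.eval (γ 1) - Q.eval (γ 0)) := by
          rw [h0, h1, hQz]; ring
        rw [this, hFγ, hQγ, ← intervalIntegral.integral_sub hint1 hint2]
        congr 1
        ext t
        ring
      -- bound the integral
      rw [hrep]
      have hb1 : ‖∫ t in (0:ℝ)..1, (f (γ t) - p.eval (γ t)) * deriv γ t‖
          ≤ ∫ t in (0:ℝ)..1, ‖(f (γ t) - p.eval (γ t)) * deriv γ t‖ :=
        intervalIntegral.norm_integral_le_integral_norm zero_le_one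
      have hintL : IntervalIntegrable (fun t => ‖(f (γ t) - p.eval (γ t)) * deriv γ t‖)
          MeasureTheory.volume 0 1 := by
        apply ContinuousOn.intervalIntegrable
        rw [hIcc]
        exact ((hfγ.sub hpγ.continuousOn).mul hdc.continuousOn).norm
      have hintR : IntervalIntegrable (fun t => N * ‖deriv γ t‖)
          MeasureTheory.volume 0 1 :=
        (continuous_const.mul hdc.norm).intervalIntegrable 0 1
      have hb2 : (∫ t in (0:ℝ)..1, ‖(f (γ t) - p.eval (γ t)) * deriv γ t‖)
          ≤ ∫ t in (0:ℝ)..1, N * ‖deriv γ t‖ := by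
        refine intervalIntegral.integral_mono_on zero_le_one hintL hintR fun t ht => ?_
        rw [norm_mul]
        refine mul_le_mul_of_nonneg_right ?_ (norm_nonneg _)
        have := le_supNorm' hTc ((hfT.sub p.continuous_aeval.continuousOn))
          (hmem t ht)
        simpa [hN, Pi.sub_def] using this
      have hb3 : (∫ t in (0:ℝ)..1, N * ‖deriv γ t‖) ≤ N * (c * δ) := by
        rw [intervalIntegral.integral_const_mul]
        refine mul_le_mul_of_nonneg_left ?_ hNnn
        calc (∫ t in (0:ℝ)..1, ‖deriv γ t‖)
            = ∫ t in (0:ℝ)..1, ‖deriv γ t‖ := by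
              simp
          _ ≤ c * δ := hlen'
      calc ‖∫ t in (0:ℝ)..1, (f (γ t) - p.eval (γ t)) * deriv γ t‖
          ≤ N * (c * δ) := hb1.trans (hb2.trans hb3)
        _ = c * δ * N := by ring
    -- conclude the ε-estimate
    have hsup : supNorm S (fun w => F w - Q.eval w) ≤ c * δ * N :=
      supNorm_le' (mul_nonneg hcδ.le hNnn) hpt
    refine (bestApprox_le' k S F Q hQdeg).trans (hsup.trans ?_)
    have := mul_le_mul_of_nonneg_left hNle hcδ.le
    linarith
  -- remove ε
  refine le_of_forall_pos_le_add fun ε hε => ?_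
  have h := main (ε / (c * δ)) (div_pos hε hcδ)
  have : c * δ * (modulus f k E (c * δ) + ε / (c * δ))
      = c * δ * modulus f k E (c * δ) + ε := by
    field_simp
  linarith
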